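/- arXiv:1908.00261 — 2 statements merged into one kernel-verified Lean document; each statement's English description precedes it below -/
import Mathlib

section
/- (Policy gradient formula for the softmax parameterization) For every finite discounted MDP and state distribution μ, the map θ ↦ V^{π_θ}(μ) on ℝ^{S×A} is differentiable and its partial derivatives are ∂V^{π_θ}(μ)/∂θ_{s,a} = (1/(1−γ)) · d^{π_θ}_μ(s) · π_θ(a|s) · A^{π_θ}(s,a). -/
open scoped BigOperators InnerProductSpace

/-- A finite Markov decision process (the data only: transition probabilities `P`,
rewards `r`, and discount factor `γ`). -/
structure FinMDP where
  S : Type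
  A : Type
  [fS : Fintype S]
  [dS : DecidableEq S]
  [fA : Fintype A]
  [dA : DecidableEq A]
  P : S → A → S → ℝ
  r : S → A → ℝ
  γ : ℝ

attribute [instance] FinMDP.fS FinMDP.dS FinMDP.fA FinMDP.dA

/-- `μ` is a probability distribution on the finite type `X`. -/
def IsDist {X : Type*} [Fintype X] (μ : X → ℝ) : Prop :=
  (∀ x, 0 ≤ μ x) ∧ ∑ x, μ x = 1

namespace FinMDP

variable (M : FinMDP)

/-- The MDP data is well formed: `P` is a transition kernel, rewards lie in `[0,1]`,
and `γ ∈ [0,1)`. -/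
def Valid : Prop :=
  (∀ s a s', 0 ≤ M.P s a s') ∧ (∀ s a, ∑ s', M.P s a s' = 1) ∧
    (∀ s a, 0 ≤ M.r s a ∧ M.r s a ≤ 1) ∧ 0 ≤ M.γ ∧ M.γ < 1

/-- `π` is a stochastic policy: `π s a` is the probability `π(a|s)`. -/
def IsPolicy (π : M.S → M.A → ℝ) : Prop :=
  (∀ s a, 0 ≤ π s a) ∧ ∀ s, ∑ a, π s a = 1

/-- State-to-state transition matrix induced by a policy. -/
noncomputable def Pmat (π : M.S → M.A → ℝ) : Matrix M.S M.S ℝ :=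
  Matrix.of fun s s' => ∑ a, π s a * M.P s a s'

/-- Expected one-step reward under a policy. -/
noncomputable def rPol (π : M.S → M.A → ℝ) (s : M.S) : ℝ :=
  ∑ a, π s a * M.r s a

/-- The value function `V^π(s₀) = E[∑ₜ γ^t r(s_t, a_t)]`. -/
noncomputable def V (π : M.S → M.A → ℝ) (s₀ : M.S) : ℝ :=
  ∑' t : ℕ, M.γ ^ t * ((M.Pmat π ^ t).mulVec (M.rPol π)) s₀

/-- `V^π(ρ)` for a starting state distribution `ρ`. -/
noncomputable def Vd (π : M.S → M.A → ℝ) (ρ : M.S → ℝ) : ℝ :=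
  ∑ s, ρ s * M.V π s

/-- The action-value function `Q^π(s,a)`. -/
noncomputable def Qf (π : M.S → M.A → ℝ) (s : M.S) (a : M.A) : ℝ :=
  M.r s a + M.γ * ∑ s', M.P s a s' * M.V π s'

/-- The advantage function `A^π(s,a) = Q^π(s,a) - V^π(s)`. -/
noncomputable def Adv (π : M.S → M.A → ℝ) (s : M.S) (a : M.A) : ℝ :=
  M.Qf π s a - M.V π s

/-- Discounted state visitation distribution `d^π_{s₀}(s)`. -/
noncomputable def dvisit (π : M.S → M.A → ℝ) (s₀ s : M.S) : ℝ :=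
  (1 - M.γ) * ∑' t : ℕ, M.γ ^ t * (M.Pmat π ^ t) s₀ s

/-- Discounted state visitation distribution `d^π_μ(s)` for a starting distribution `μ`. -/
noncomputable def dvisitD (π : M.S → M.A → ℝ) (μ : M.S → ℝ) (s : M.S) : ℝ :=
  ∑ s₀, μ s₀ * M.dvisit π s₀ s

/-- State-action transition matrix induced by a policy. -/
noncomputable def PmatSA (π : M.S → M.A → ℝ) :
    Matrix (M.S × M.A) (M.S × M.A) ℝ :=
  Matrix.of fun p q => M.P p.1 p.2 q.1 * π q.1 q.2

/-- Discounted state-action visitation measure `d^π_ν(s,a)` started from `(s₀,a₀) ∼ ν`,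
executing `a₀` first and following `π` thereafter. -/
noncomputable def dvisitSA (π : M.S → M.A → ℝ) (ν : M.S × M.A → ℝ)
    (p : M.S × M.A) : ℝ :=
  (1 - M.γ) * ∑' t : ℕ, M.γ ^ t * ∑ p₀, ν p₀ * (M.PmatSA π ^ t) p₀ p

/-- The softmax policy `π_θ(a|s) = exp(θ_{s,a}) / ∑_{a'} exp(θ_{s,a'})`. -/
noncomputable def softmaxPolicy (θ : EuclideanSpace ℝ (M.S × M.A)) :
    M.S → M.A → ℝ :=
  fun s a => Real.exp (θ (s, a)) / ∑ a', Real.exp (θ (s, a'))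

end FinMDP

/-! For a policy `π` with `‖γ P_π‖ < 1` in the row-sum norm (every sub-stochastic policy when
`γ < 1`), the Neumann series gives `V^π = (I - γ P_π)⁻¹ r_π` and
`d^π_{s₀}(s) = (1 - γ) (I - γ P_π)⁻¹ s₀ s`. The performance difference lemma
`V^{π'} - V^π = (I - γ P_{π'})⁻¹ (∑ₐ (π' - π)(·, a) Q^π(·, a))` shows that `π ↦ V^π` is
differentiable on the open set of such `π`, with derivative
`w ↦ (I - γ P_π)⁻¹ (∑ₐ w(·, a) Q^π(·, a))`: the derivative of the resolvent drops out because
the vector it acts on vanishes at `π' = π`.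
Composing with the softmax Jacobian `∂π(a'|s')/∂θ_{s,a} = [s' = s] π(a'|s) ([a' = a] - π(a|s))`
and using `∑ₐ π(a|s) Q^π(s, a) = V^π(s)` turns `∑ₐ' ∂π Q^π` into `π(a|s) A^π(s, a)`. -/

namespace FinMDP

attribute [local instance] Matrix.linftyOpNormedAddCommGroup Matrix.linftyOpNormedSpace
  Matrix.linftyOpNormedRing Matrix.linftyOpNormedAlgebra

open Matrix Topology

variable {M : FinMDP} {π : M.S → M.A → ℝ}

/-- `Ring.inverse` makes this `0` when `I - γ P_π` is singular. -/
noncomputable def resolvent (π : M.S → M.A → ℝ) : Matrix M.S M.S ℝ :=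
  Ring.inverse (1 - M.γ • M.Pmat π)

theorem sum_Pmat_apply (hP : ∀ s a, ∑ s', M.P s a s' = 1) (s : M.S) :
    ∑ s', M.Pmat π s s' = ∑ a, π s a := by
  simp only [Pmat, of_apply]
  rw [Finset.sum_comm]
  simp [← Finset.mul_sum, hP]

theorem norm_smul_Pmat_le (hM : M.Valid) (hπ₀ : ∀ s a, 0 ≤ π s a)
    (hπ₁ : ∀ s, ∑ a, π s a ≤ 1) : ‖M.γ • M.Pmat π‖ ≤ M.γ := by
  obtain ⟨hP₀, hP₁, -, hγ₀, -⟩ := hM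
  change ‖fun s => WithLp.toLp 1 ((M.γ • M.Pmat π) s)‖ ≤ M.γ
  refine (pi_norm_le_iff_of_nonneg hγ₀).2 fun s => ?_
  have hPπ : ∀ s', 0 ≤ M.Pmat π s s' :=
    fun s' => Finset.sum_nonneg fun a _ => mul_nonneg (hπ₀ s a) (hP₀ s a s')
  calc ‖WithLp.toLp 1 ((M.γ • M.Pmat π) s)‖ = M.γ * ∑ s', M.Pmat π s s' := by
        simp [PiLp.norm_eq_of_L1, abs_of_nonneg hγ₀, abs_of_nonneg (hPπ _), Finset.mul_sum]
    _ ≤ M.γ * 1 := by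
        rw [sum_Pmat_apply hP₁]; exact mul_le_mul_of_nonneg_left (hπ₁ s) hγ₀
    _ = M.γ := mul_one _

theorem hasSum_resolvent_apply (h : ‖M.γ • M.Pmat π‖ < 1) (s₀ s : M.S) :
    HasSum (fun t : ℕ => M.γ ^ t * (M.Pmat π ^ t) s₀ s) (M.resolvent π s₀ s) := by
  have hgeom : HasSum (fun t : ℕ => (M.γ • M.Pmat π) ^ t) (M.resolvent π) := by
    rw [resolvent, ← geom_series_eq_inverse _ h]
    exact (summable_geometric_of_norm_lt_one h).hasSum
  simpa [smul_pow] using Pi.hasSum.1 (Pi.hasSum.1 hgeom s₀) s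

theorem dvisit_eq (h : ‖M.γ • M.Pmat π‖ < 1) (s₀ s : M.S) :
    M.dvisit π s₀ s = (1 - M.γ) * M.resolvent π s₀ s := by
  rw [dvisit, (hasSum_resolvent_apply h s₀ s).tsum_eq]

theorem V_eq_resolvent_mulVec (h : ‖M.γ • M.Pmat π‖ < 1) :
    M.V π = M.resolvent π *ᵥ M.rPol π := by
  funext s₀
  refine HasSum.tsum_eq ?_
  simpa [mulVec, dotProduct, Finset.mul_sum, mul_assoc] using
    hasSum_sum fun s _ => (hasSum_resolvent_apply h s₀ s).mul_right (M.rPol π s)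

theorem one_sub_smul_Pmat_mulVec_V (h : ‖M.γ • M.Pmat π‖ < 1) :
    (1 - M.γ • M.Pmat π) *ᵥ M.V π = M.rPol π := by
  rw [V_eq_resolvent_mulVec h, mulVec_mulVec, resolvent,
    Ring.mul_inverse_cancel _ (isUnit_one_sub_of_norm_lt_one h), one_mulVec]

theorem sum_mul_Qf (π w : M.S → M.A → ℝ) :
    (fun s => ∑ a, w s a * M.Qf π s a) = M.rPol w + M.γ • (M.Pmat w *ᵥ M.V π) := by
  funext s
  simp only [Qf, rPol, Pmat, mul_add, Finset.sum_add_distrib, Pi.add_apply, Pi.smul_apply,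
    smul_eq_mul, mulVec, dotProduct, of_apply, Finset.mul_sum, Finset.sum_mul]
  rw [Finset.sum_comm (γ := M.A)]
  congr 1
  exact Finset.sum_congr rfl fun _ _ => Finset.sum_congr rfl fun _ _ => by ring

theorem sum_mul_Qf_self (h : ‖M.γ • M.Pmat π‖ < 1) :
    (fun s => ∑ a, π s a * M.Qf π s a) = M.V π := by
  have hV := one_sub_smul_Pmat_mulVec_V h
  rw [sub_mulVec, one_mulVec, smul_mulVec] at hV
  rw [sum_mul_Qf, ← hV, sub_add_cancel]

/-- The performance difference lemma. -/
theorem V_sub_V {π' : M.S → M.A → ℝ} (h' : ‖M.γ • M.Pmat π'‖ < 1)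
    (h : ‖M.γ • M.Pmat π‖ < 1) :
    M.V π' - M.V π = M.resolvent π' *ᵥ fun s => ∑ a, (π' s a - π s a) * M.Qf π s a := by
  have hdiff : (fun s => ∑ a, (π' s a - π s a) * M.Qf π s a) =
      (1 - M.γ • M.Pmat π') *ᵥ (M.V π' - M.V π) := by
    simp only [sub_mul, Finset.sum_sub_distrib]
    change (fun s => ∑ a, π' s a * M.Qf π s a) - (fun s => ∑ a, π s a * M.Qf π s a) = _
    rw [sum_mul_Qf, sum_mul_Qf_self h, mulVec_sub, one_sub_smul_Pmat_mulVec_V h', sub_mulVec,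
      one_mulVec, smul_mulVec]
    abel
  rw [hdiff, mulVec_mulVec, resolvent,
    Ring.inverse_mul_cancel _ (isUnit_one_sub_of_norm_lt_one h'), one_mulVec]

variable (M) in
noncomputable def PmatCLM : (M.S → M.A → ℝ) →L[ℝ] Matrix M.S M.S ℝ :=
  LinearMap.toContinuousLinearMap
    { toFun := M.Pmat
      map_add' := fun π π' => by ext; simp [Pmat, add_mul, Finset.sum_add_distrib]
      map_smul' := fun c π => by ext; simp [Pmat, Finset.mul_sum, mul_assoc] }

variable (M) in
noncomputable def coordCLM (s : M.S) (a : M.A) : (M.S → M.A → ℝ) →L[ℝ] ℝ :=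
  (ContinuousLinearMap.proj (R := ℝ) (φ := fun _ : M.A => ℝ) a).comp
    (ContinuousLinearMap.proj (R := ℝ) (φ := fun _ : M.S => M.A → ℝ) s)

@[simp]
theorem coordCLM_apply (s : M.S) (a : M.A) (w : M.S → M.A → ℝ) : M.coordCLM s a w = w s a :=
  rfl

theorem eventually_norm_smul_Pmat_lt_one (h : ‖M.γ • M.Pmat π‖ < 1) :
    ∀ᶠ π' in 𝓝 π, ‖M.γ • M.Pmat π'‖ < 1 :=
  ((M.PmatCLM.continuous.const_smul M.γ).norm.continuousAt).eventually_lt continuousAt_const h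

theorem differentiableAt_resolvent_apply (h : ‖M.γ • M.Pmat π‖ < 1) (s₀ s : M.S) :
    DifferentiableAt ℝ (fun π' => M.resolvent π' s₀ s) π := by
  have hΦ : Differentiable ℝ fun π' => 1 - M.γ • M.PmatCLM π' :=
    (differentiable_const _).sub (M.PmatCLM.differentiable.const_smul M.γ)
  have hR : DifferentiableAt ℝ M.resolvent π :=
    (differentiableAt_inverse (isUnit_one_sub_of_norm_lt_one h)).comp π (hΦ π)
  exact (entryLinearMap ℝ ℝ s₀ s).toContinuousLinearMap.differentiableAt.comp π hR

theorem hasFDerivAt_V (h : ‖M.γ • M.Pmat π‖ < 1) (s₀ : M.S) :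
    HasFDerivAt (fun π' => M.V π' s₀)
      (∑ s, ∑ a, (M.resolvent π s₀ s * M.Qf π s a) • M.coordCLM s a) π := by
  have hev : (fun π' => M.V π' s₀) =ᶠ[𝓝 π] fun π' =>
      M.V π s₀ + ∑ s, M.resolvent π' s₀ s * ∑ a, (π' s a - π s a) * M.Qf π s a := by
    filter_upwards [eventually_norm_smul_Pmat_lt_one h] with π' h'
    rw [← sub_eq_iff_eq_add', ← Pi.sub_apply, V_sub_V h' h]
    rfl
  have hg : ∀ s, HasFDerivAt (fun π' : M.S → M.A → ℝ => ∑ a, (π' s a - π s a) * M.Qf π s a)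
      (∑ a, M.Qf π s a • M.coordCLM s a) π :=
    fun s => HasFDerivAt.fun_sum fun a _ =>
      ((M.coordCLM s a).hasFDerivAt.sub_const (π s a)).mul_const (M.Qf π s a)
  have hsum := (HasFDerivAt.fun_sum (u := Finset.univ) fun s _ =>
    (differentiableAt_resolvent_apply h s₀ s).hasFDerivAt.fun_mul (hg s)).const_add (M.V π s₀)
  refine (hsum.congr_of_eventuallyEq hev).congr_fderiv ?_
  simp [Finset.smul_sum, smul_smul]

theorem hasFDerivAt_Vd (h : ‖M.γ • M.Pmat π‖ < 1) (μ : M.S → ℝ) :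
    HasFDerivAt (fun π' => M.Vd π' μ)
      (∑ s₀, μ s₀ • ∑ s, ∑ a, (M.resolvent π s₀ s * M.Qf π s a) • M.coordCLM s a) π :=
  HasFDerivAt.fun_sum fun s₀ _ => (hasFDerivAt_V h s₀).const_mul (μ s₀)

/-- The policy gradient theorem for the direct parameterization. -/
theorem fderiv_Vd_apply (h : ‖M.γ • M.Pmat π‖ < 1) (hγ : M.γ ≠ 1) (μ : M.S → ℝ)
    (w : M.S → M.A → ℝ) :
    fderiv ℝ (fun π' => M.Vd π' μ) π w =
      1 / (1 - M.γ) * ∑ s, M.dvisitD π μ s * ∑ a, w s a * M.Qf π s a := by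
  have hγ' : 1 - M.γ ≠ 0 := sub_ne_zero.2 hγ.symm
  simp only [(hasFDerivAt_Vd h μ).fderiv, dvisitD, dvisit_eq h, coordCLM_apply, _root_.sum_apply,
    _root_.smul_apply, smul_eq_mul, Finset.mul_sum, Finset.sum_mul]
  rw [Finset.sum_comm]
  refine Finset.sum_congr rfl fun s _ => Finset.sum_comm.trans ?_
  refine Finset.sum_congr rfl fun a _ => Finset.sum_congr rfl fun s₀ _ => ?_
  field_simp

theorem sum_exp_pos (θ : EuclideanSpace ℝ (M.S × M.A)) (s : M.S) (a : M.A) :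
    0 < ∑ b, Real.exp (θ (s, b)) :=
  Finset.sum_pos (fun _ _ => Real.exp_pos _) ⟨a, Finset.mem_univ a⟩

theorem softmaxPolicy_nonneg (θ : EuclideanSpace ℝ (M.S × M.A)) (s : M.S) (a : M.A) :
    0 ≤ M.softmaxPolicy θ s a := by
  unfold softmaxPolicy
  positivity

theorem sum_softmaxPolicy_le_one (θ : EuclideanSpace ℝ (M.S × M.A)) (s : M.S) :
    ∑ a, M.softmaxPolicy θ s a ≤ 1 := by
  simp only [softmaxPolicy, ← Finset.sum_div]
  exact div_self_le_one _

theorem norm_smul_Pmat_softmaxPolicy_lt_one (hM : M.Valid) (θ : EuclideanSpace ℝ (M.S × M.A)) :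
    ‖M.γ • M.Pmat (M.softmaxPolicy θ)‖ < 1 :=
  (norm_smul_Pmat_le hM (softmaxPolicy_nonneg θ) (sum_softmaxPolicy_le_one θ)).trans_lt
    hM.2.2.2.2

theorem hasLineDerivAt_softmaxPolicy_apply (θ u : EuclideanSpace ℝ (M.S × M.A)) (s : M.S)
    (a : M.A) :
    HasLineDerivAt ℝ (fun θ => M.softmaxPolicy θ s a)
      (M.softmaxPolicy θ s a * (u (s, a) - ∑ b, M.softmaxPolicy θ s b * u (s, b))) θ u := by
  have hexp : ∀ b, HasDerivAt (fun t : ℝ => Real.exp ((θ + t • u) (s, b)))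
      (Real.exp (θ (s, b)) * u (s, b)) 0 := fun b => by
    simpa using (((hasDerivAt_id (0 : ℝ)).mul_const (u (s, b))).const_add (θ (s, b))).exp
  have hZ := (sum_exp_pos θ s a).ne'
  refine ((hexp a).fun_div (HasDerivAt.fun_sum fun b _ => hexp b)
    (by simpa using hZ)).congr_deriv ?_
  simp only [softmaxPolicy, zero_smul, add_zero, div_mul_eq_mul_div, ← Finset.sum_div]
  field_simp

theorem differentiable_softmaxPolicy : Differentiable ℝ M.softmaxPolicy := fun θ =>
  differentiableAt_pi.2 fun s => differentiableAt_pi.2 fun a => by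
    unfold softmaxPolicy
    fun_prop (disch := exact (sum_exp_pos θ s a).ne')

theorem fderiv_softmaxPolicy_apply (θ u : EuclideanSpace ℝ (M.S × M.A)) (s : M.S) (a : M.A) :
    fderiv ℝ M.softmaxPolicy θ u s a =
      M.softmaxPolicy θ s a * (u (s, a) - ∑ b, M.softmaxPolicy θ s b * u (s, b)) :=
  (((M.coordCLM s a).hasFDerivAt.comp θ (differentiable_softmaxPolicy θ).hasFDerivAt).hasLineDerivAt
    u).unique (hasLineDerivAt_softmaxPolicy_apply θ u s a)

theorem sum_fderiv_softmaxPolicy_mul_Qf (hM : M.Valid) (θ u : EuclideanSpace ℝ (M.S × M.A))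
    (s : M.S) :
    ∑ a, fderiv ℝ M.softmaxPolicy θ u s a * M.Qf (M.softmaxPolicy θ) s a =
      ∑ a, M.softmaxPolicy θ s a * u (s, a) * M.Adv (M.softmaxPolicy θ) s a := by
  have hV := congrFun (sum_mul_Qf_self (norm_smul_Pmat_softmaxPolicy_lt_one hM θ)) s
  set c := ∑ b, M.softmaxPolicy θ s b * u (s, b)
  simp only [fderiv_softmaxPolicy_apply, Adv, mul_sub, sub_mul, Finset.sum_sub_distrib]
  congr 1
  calc ∑ b, M.softmaxPolicy θ s b * c * M.Qf (M.softmaxPolicy θ) s b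
      = c * ∑ b, M.softmaxPolicy θ s b * M.Qf (M.softmaxPolicy θ) s b := by
        rw [Finset.mul_sum]; exact Finset.sum_congr rfl fun _ _ => by ring
    _ = ∑ b, M.softmaxPolicy θ s b * u (s, b) * M.V (M.softmaxPolicy θ) s := by
        rw [hV, Finset.sum_mul]

end FinMDP

theorem softmax_policy_gradient_formula_general (M : FinMDP) (hM : M.Valid)
    (μ : M.S → ℝ) :
    Differentiable ℝ (fun θ : EuclideanSpace ℝ (M.S × M.A) =>
        M.Vd (M.softmaxPolicy θ) μ) ∧
      ∀ (θ : EuclideanSpace ℝ (M.S × M.A)) (s : M.S) (a : M.A),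
        fderiv ℝ (fun θ' : EuclideanSpace ℝ (M.S × M.A) =>
            M.Vd (M.softmaxPolicy θ') μ) θ (EuclideanSpace.single (s, a) 1) =
          (1 / (1 - M.γ)) * M.dvisitD (M.softmaxPolicy θ) μ s *
            (M.softmaxPolicy θ s a * M.Adv (M.softmaxPolicy θ) s a) := by
  have hσ := FinMDP.differentiable_softmaxPolicy (M := M)
  have hcontr := FinMDP.norm_smul_Pmat_softmaxPolicy_lt_one hM
  have hVd := fun θ => FinMDP.hasFDerivAt_Vd (hcontr θ) μ
  refine ⟨fun θ => (hVd θ).differentiableAt.comp θ (hσ θ), fun θ s a => ?_⟩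
  rw [fderiv_fun_comp θ (hVd θ).differentiableAt (hσ θ), ContinuousLinearMap.comp_apply,
    FinMDP.fderiv_Vd_apply (hcontr θ) hM.2.2.2.2.ne]
  simp only [FinMDP.sum_fderiv_softmaxPolicy_mul_Qf hM]
  rw [mul_assoc]
  congr 1
  simp [PiLp.single_apply, ite_and]

/-- **Policy gradient formula for the softmax parameterization.** -/
theorem softmax_policy_gradient_formula (M : FinMDP) (hM : M.Valid)
    (μ : M.S → ℝ) (hμ : IsDist μ) :
    Differentiable ℝ (fun θ : EuclideanSpace ℝ (M.S × M.A) =>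
        M.Vd (M.softmaxPolicy θ) μ) ∧
      ∀ (θ : EuclideanSpace ℝ (M.S × M.A)) (s : M.S) (a : M.A),
        fderiv ℝ (fun θ' : EuclideanSpace ℝ (M.S × M.A) =>
            M.Vd (M.softmaxPolicy θ') μ) θ (EuclideanSpace.single (s, a) 1) =
          (1 / (1 - M.γ)) * M.dvisitD (M.softmaxPolicy θ) μ s *
            (M.softmaxPolicy θ s a * M.Adv (M.softmaxPolicy θ) s a) :=
  softmax_policy_gradient_formula_general M hM μ
end

section
/- (NPG with the softmax parameterization is soft policy iteration) Consider a finite discounted MDP, the softmax parameterization, a state distribution ρ, and θ ∈ ℝ^{S×A} with d^{π_θ}_ρ(s) > 0 for all s. Define the compatible function approximation loss L^θ(w) = E_{s∼d^{π_θ}_ρ} E_{a∼π_θ(·|s)} [ (w·∇_θ log π_θ(a|s) − A^{π_θ}(s,a))² ] for w ∈ ℝ^{S×A}. Then: (i) w minimizes L^θ over ℝ^{S×A} if and only if w_{s,a} = A^{π_θ}(s,a) + c_s for some constants c_s ∈ ℝ depending only on the state; and (ii) for every minimizer w and every η > 0, the updated parameter θ′ = θ + (η/(1−γ)) w satisfies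 π_{θ′}(a|s) = π_θ(a|s) · exp(η A^{π_θ}(s,a)/(1−γ)) / Z(s), where Z(s) = Σ_{a′} π_θ(a′|s) exp(η A^{π_θ}(s,a′)/(1−γ)). -/
open scoped BigOperators InnerProductSpace

/-! The softmax score is a centred indicator, so the loss is a positively weighted sum of
squares of the residuals `w (s,a) - 𝔼_{π_θ(·|s)} w (s,·) - A(s,a)`. By the Bellman equation
`𝔼_{π_θ(·|s)} A(s,·) = 0`, so `w = A` is a zero of the loss and the minimizers are exactly the
zeros, namely the `A + c`. Adding `β • w` to `θ` tilts `π_θ(·|s)` by `exp (β * w (s,·))`, and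
the per-state constant `c s` cancels in the normalization. -/

open Matrix Finset

lemma Matrix.mulVec_apply_le_one_of_mem_rowStochastic {n : Type*} [Fintype n]
    [DecidableEq n] {P : Matrix n n ℝ} (hP : P ∈ rowStochastic ℝ n) {x : n → ℝ}
    (hx : ∀ i, x i ≤ 1) (i : n) :
    (P *ᵥ x) i ≤ 1 :=
  calc (P *ᵥ x) i = ∑ j, P i j * x j := rfl
    _ ≤ ∑ j, P i j := sum_le_sum fun j _ =>
        mul_le_of_le_one_right (nonneg_of_mem_rowStochastic hP) (hx j)
    _ = 1 := sum_row_of_mem_rowStochastic hP i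

section CompatibleLoss

variable {S A : Type*} [Fintype S] [Fintype A]

def compatibleLoss (d : S → ℝ) (π g : S → A → ℝ) (w : EuclideanSpace ℝ (S × A)) :
    ℝ :=
  ∑ s, d s * ∑ a, π s a * ((w (s, a) - ∑ a', π s a' * w (s, a')) - g s a) ^ 2

variable {d : S → ℝ} {π g : S → A → ℝ}

lemma compatibleLoss_nonneg (hd : ∀ s, 0 ≤ d s) (hπ : ∀ s a, 0 ≤ π s a)
    (w : EuclideanSpace ℝ (S × A)) : 0 ≤ compatibleLoss d π g w :=
  sum_nonneg fun s _ =>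
    mul_nonneg (hd s) (sum_nonneg fun a _ => mul_nonneg (hπ s a) (sq_nonneg _))

lemma compatibleLoss_eq_zero_iff (hd : ∀ s, 0 < d s) (hπ : ∀ s a, 0 < π s a)
    (hπ1 : ∀ s, ∑ a, π s a = 1) (hg : ∀ s, ∑ a, π s a * g s a = 0)
    {w : EuclideanSpace ℝ (S × A)} :
    compatibleLoss d π g w = 0 ↔ ∃ c : S → ℝ, ∀ s a, w (s, a) = g s a + c s := by
  constructor
  · intro h
    refine ⟨fun s => ∑ a', π s a' * w (s, a'), fun s a => ?_⟩
    have hterms := (sum_eq_zero_iff_of_nonneg fun s _ => mul_nonneg (hd s).le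
      (sum_nonneg fun a _ => mul_nonneg (hπ s a).le (sq_nonneg _))).1 h s (mem_univ s)
    have hres := (sum_eq_zero_iff_of_nonneg fun a _ => mul_nonneg (hπ s a).le (sq_nonneg _)).1
      ((mul_eq_zero.1 hterms).resolve_left (hd s).ne') a (mem_univ a)
    have := pow_eq_zero_iff two_ne_zero |>.1 ((mul_eq_zero.1 hres).resolve_left (hπ s a).ne')
    linarith
  · rintro ⟨c, hc⟩
    have hmean : ∀ s, ∑ a', π s a' * w (s, a') = c s := fun s => by
      simp only [hc, mul_add, sum_add_distrib, hg, ← sum_mul, hπ1, zero_add, one_mul]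
    refine sum_eq_zero fun s _ => mul_eq_zero_of_right _ (sum_eq_zero fun a _ => ?_)
    rw [hmean, hc]
    ring

lemma forall_compatibleLoss_le_iff (hd : ∀ s, 0 < d s) (hπ : ∀ s a, 0 < π s a)
    (hπ1 : ∀ s, ∑ a, π s a = 1) (hg : ∀ s, ∑ a, π s a * g s a = 0)
    (w : EuclideanSpace ℝ (S × A)) :
    (∀ w', compatibleLoss d π g w ≤ compatibleLoss d π g w') ↔
      ∃ c : S → ℝ, ∀ s a, w (s, a) = g s a + c s := by
  have hnonneg := compatibleLoss_nonneg (g := g) (fun s => (hd s).le) (fun s a => (hπ s a).le)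
  rw [← compatibleLoss_eq_zero_iff hd hπ hπ1 hg]
  have hg0 : compatibleLoss d π g (WithLp.toLp 2 fun p => g p.1 p.2) = 0 :=
    (compatibleLoss_eq_zero_iff hd hπ hπ1 hg).2 ⟨0, fun _ _ => (add_zero _).symm⟩
  exact ⟨fun hw => ((hw _).trans_eq hg0).antisymm (hnonneg w), fun hw w' => hw ▸ hnonneg w'⟩

end CompatibleLoss

namespace FinMDP

variable (M : FinMDP) {π : M.S → M.A → ℝ}

lemma Pmat_mem_rowStochastic (hM : M.Valid) (hπ : M.IsPolicy π) :
    M.Pmat π ∈ rowStochastic ℝ M.S := by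
  refine mem_rowStochastic_iff_sum.2
    ⟨fun s s' => sum_nonneg fun a _ => mul_nonneg (hπ.1 s a) (hM.1 s a s'), fun s => ?_⟩
  simp only [Pmat, of_apply]
  rw [sum_comm]
  simp only [← mul_sum, hM.2.1, mul_one, hπ.2]

lemma rPol_mem_Icc (hM : M.Valid) (hπ : M.IsPolicy π) (s : M.S) :
    M.rPol π s ∈ Set.Icc 0 1 :=
  ⟨sum_nonneg fun a _ => mul_nonneg (hπ.1 s a) (hM.2.2.1 s a).1,
    calc M.rPol π s ≤ ∑ a, π s a := sum_le_sum fun a _ =>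
          mul_le_of_le_one_right (hπ.1 s a) (hM.2.2.1 s a).2
      _ = 1 := hπ.2 s⟩

lemma pow_mulVec_rPol_mem_Icc (hM : M.Valid) (hπ : M.IsPolicy π) (t : ℕ) (s : M.S) :
    (M.Pmat π ^ t *ᵥ M.rPol π) s ∈ Set.Icc 0 1 := by
  have hPt := pow_mem (M.Pmat_mem_rowStochastic hM hπ) t
  exact ⟨nonneg_mulVec_of_mem_rowStochastic hPt (fun s => (M.rPol_mem_Icc hM hπ s).1) s,
    mulVec_apply_le_one_of_mem_rowStochastic hPt (fun s => (M.rPol_mem_Icc hM hπ s).2) s⟩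

lemma summable_V (hM : M.Valid) (hπ : M.IsPolicy π) (s : M.S) :
    Summable fun t : ℕ => M.γ ^ t * (M.Pmat π ^ t *ᵥ M.rPol π) s := by
  have hγ0 := hM.2.2.2.1
  refine (summable_geometric_of_lt_one hγ0 hM.2.2.2.2).of_nonneg_of_le (fun t => ?_) (fun t => ?_)
  · exact mul_nonneg (pow_nonneg hγ0 t) (M.pow_mulVec_rPol_mem_Icc hM hπ t s).1
  · exact mul_le_of_le_one_right (pow_nonneg hγ0 t) (M.pow_mulVec_rPol_mem_Icc hM hπ t s).2

lemma V_eq_rPol_add (hM : M.Valid) (hπ : M.IsPolicy π) (s : M.S) :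
    M.V π s = M.rPol π s + M.γ * ∑ s', M.Pmat π s s' * M.V π s' := by
  have hshift : ∀ t : ℕ, M.γ ^ (t + 1) * (M.Pmat π ^ (t + 1) *ᵥ M.rPol π) s =
      M.γ * ∑ s', M.Pmat π s s' * (M.γ ^ t * (M.Pmat π ^ t *ᵥ M.rPol π) s') := by
    intro t
    calc M.γ ^ (t + 1) * (M.Pmat π ^ (t + 1) *ᵥ M.rPol π) s
        = M.γ * M.γ ^ t * ∑ s', M.Pmat π s s' * (M.Pmat π ^ t *ᵥ M.rPol π) s' := by
          rw [pow_succ' M.γ, pow_succ' (M.Pmat π), ← mulVec_mulVec]; rfl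
      _ = _ := by
          simp only [mul_sum, mul_assoc, mul_left_comm]
  rw [V, (M.summable_V hM hπ s).tsum_eq_zero_add, tsum_congr hshift, tsum_mul_left,
    Summable.tsum_finsetSum fun s' _ => (M.summable_V hM hπ s').mul_left _]
  simp only [pow_zero, one_mul, one_mulVec, tsum_mul_left, V]

lemma sum_mul_Qf_s10 (hM : M.Valid) (hπ : M.IsPolicy π) (s : M.S) :
    ∑ a, π s a * M.Qf π s a = M.V π s := by
  rw [M.V_eq_rPol_add hM hπ s]
  simp only [Qf, Pmat, rPol, of_apply, mul_add, sum_add_distrib, mul_sum, sum_mul]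
  rw [sum_comm]
  exact congrArg _ (sum_congr rfl fun _ _ => sum_congr rfl fun _ _ => by ring)

lemma sum_mul_Adv (hM : M.Valid) (hπ : M.IsPolicy π) (s : M.S) :
    ∑ a, π s a * M.Adv π s a = 0 := by
  simp only [Adv, mul_sub, sum_sub_distrib, M.sum_mul_Qf_s10 hM hπ, ← sum_mul, hπ.2 s, one_mul,
    sub_self]

lemma softmaxPolicy_pos (θ : EuclideanSpace ℝ (M.S × M.A)) (s : M.S) (a : M.A) :
    0 < M.softmaxPolicy θ s a :=
  div_pos (Real.exp_pos _) (sum_pos (fun _ _ => Real.exp_pos _) ⟨a, mem_univ a⟩)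

lemma isPolicy_softmaxPolicy [Nonempty M.A] (θ : EuclideanSpace ℝ (M.S × M.A)) :
    M.IsPolicy (M.softmaxPolicy θ) :=
  ⟨fun s a => (M.softmaxPolicy_pos θ s a).le, fun s => by
    simp only [softmaxPolicy, ← sum_div]
    exact div_self (sum_pos (fun _ _ => Real.exp_pos _) univ_nonempty).ne'⟩

lemma softmaxPolicy_add_smul (θ w : EuclideanSpace ℝ (M.S × M.A)) (β : ℝ) (s : M.S)
    (a : M.A) :
    M.softmaxPolicy (θ + β • w) s a =
      M.softmaxPolicy θ s a * Real.exp (β * w (s, a)) /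
        ∑ a', M.softmaxPolicy θ s a' * Real.exp (β * w (s, a')) := by
  have hZ : 0 < ∑ a', Real.exp (θ (s, a')) :=
    sum_pos (fun _ _ => Real.exp_pos _) ⟨a, mem_univ a⟩
  simp only [softmaxPolicy, PiLp.add_apply, PiLp.smul_apply, smul_eq_mul, Real.exp_add,
    div_mul_eq_mul_div, ← sum_div]
  rw [div_div_div_cancel_right₀ hZ.ne']

lemma softmaxPolicy_add_smul_of_eq_add_const (θ w : EuclideanSpace ℝ (M.S × M.A)) (β : ℝ)
    (s : M.S) (f : M.A → ℝ) (c : ℝ) (hw : ∀ a, w (s, a) = f a + c) (a : M.A) :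
    M.softmaxPolicy (θ + β • w) s a =
      M.softmaxPolicy θ s a * Real.exp (β * f a) /
        ∑ a', M.softmaxPolicy θ s a' * Real.exp (β * f a') := by
  simp only [softmaxPolicy_add_smul, hw, mul_add, Real.exp_add, ← mul_assoc, ← sum_mul]
  exact mul_div_mul_right _ _ (Real.exp_ne_zero _)

end FinMDP

theorem npg_softmax_soft_policy_iteration_general (M : FinMDP) (hM : M.Valid)
    (ρ : M.S → ℝ)
    (θ : EuclideanSpace ℝ (M.S × M.A))
    (hpos : ∀ s, 0 < M.dvisitD (M.softmaxPolicy θ) ρ s)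
    -- the compatible function approximation loss `L^θ(w)`
    (L : EuclideanSpace ℝ (M.S × M.A) → ℝ)
    (hL : ∀ w : EuclideanSpace ℝ (M.S × M.A),
        L w = ∑ s, M.dvisitD (M.softmaxPolicy θ) ρ s *
          ∑ a, M.softmaxPolicy θ s a *
            ((w (s, a) - ∑ a', M.softmaxPolicy θ s a' * w (s, a')) -
              M.Adv (M.softmaxPolicy θ) s a) ^ 2) :
    (∀ w : EuclideanSpace ℝ (M.S × M.A),
        (∀ w' : EuclideanSpace ℝ (M.S × M.A), L w ≤ L w') ↔
          ∃ c : M.S → ℝ, ∀ s a, w (s, a) = M.Adv (M.softmaxPolicy θ) s a + c s) ∧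
      ∀ w : EuclideanSpace ℝ (M.S × M.A),
        (∀ w' : EuclideanSpace ℝ (M.S × M.A), L w ≤ L w') →
        ∀ η : ℝ, 0 < η → ∀ s a,
          M.softmaxPolicy (θ + (η / (1 - M.γ)) • w) s a =
            M.softmaxPolicy θ s a *
                Real.exp (η * M.Adv (M.softmaxPolicy θ) s a / (1 - M.γ)) /
              ∑ a', M.softmaxPolicy θ s a' *
                Real.exp (η * M.Adv (M.softmaxPolicy θ) s a' / (1 - M.γ)) := by
  rcases isEmpty_or_nonempty M.A with _ | _
  · exact ⟨fun w => ⟨fun _ => ⟨0, fun _ a => isEmptyElim a⟩, fun _ w' => by simp [hL]⟩,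
      fun _ _ _ _ _ a => isEmptyElim a⟩
  obtain rfl : L = compatibleLoss (M.dvisitD _ ρ) (M.softmaxPolicy θ) (M.Adv _) := funext hL
  have hπ := M.isPolicy_softmaxPolicy θ
  have hmin :=
    forall_compatibleLoss_le_iff hpos (M.softmaxPolicy_pos θ) hπ.2 (M.sum_mul_Adv hM hπ)
  refine ⟨hmin, fun w hw η _ s a => ?_⟩
  obtain ⟨c, hc⟩ := (hmin w).1 hw
  rw [M.softmaxPolicy_add_smul_of_eq_add_const θ w _ s _ (c s) (hc s)]
  simp only [div_mul_eq_mul_div]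

/-- **NPG with the softmax parameterization is soft policy iteration.** -/
theorem npg_softmax_soft_policy_iteration (M : FinMDP) (hM : M.Valid)
    (ρ : M.S → ℝ) (hρ : IsDist ρ)
    (θ : EuclideanSpace ℝ (M.S × M.A))
    (hpos : ∀ s, 0 < M.dvisitD (M.softmaxPolicy θ) ρ s)
    -- the compatible function approximation loss `L^θ(w)`
    (L : EuclideanSpace ℝ (M.S × M.A) → ℝ)
    (hL : ∀ w : EuclideanSpace ℝ (M.S × M.A),
        L w = ∑ s, M.dvisitD (M.softmaxPolicy θ) ρ s *
          ∑ a, M.softmaxPolicy θ s a *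
            ((w (s, a) - ∑ a', M.softmaxPolicy θ s a' * w (s, a')) -
              M.Adv (M.softmaxPolicy θ) s a) ^ 2) :
    (∀ w : EuclideanSpace ℝ (M.S × M.A),
        (∀ w' : EuclideanSpace ℝ (M.S × M.A), L w ≤ L w') ↔
          ∃ c : M.S → ℝ, ∀ s a, w (s, a) = M.Adv (M.softmaxPolicy θ) s a + c s) ∧
      ∀ w : EuclideanSpace ℝ (M.S × M.A),
        (∀ w' : EuclideanSpace ℝ (M.S × M.A), L w ≤ L w') →
        ∀ η : ℝ, 0 < η → ∀ s a,
          M.softmaxPolicy (θ + (η / (1 - M.γ)) • w) s a =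
            M.softmaxPolicy θ s a *
                Real.exp (η * M.Adv (M.softmaxPolicy θ) s a / (1 - M.γ)) /
              ∑ a', M.softmaxPolicy θ s a' *
                Real.exp (η * M.Adv (M.softmaxPolicy θ) s a' / (1 - M.γ)) :=
  npg_softmax_soft_policy_iteration_general M hM ρ θ hpos L hL
end
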